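/- The degree-2 component of Y := -Ξ^{-1} + x_0 s(Ξ) x_0 equals (1/2)\sum_{k<l}[x_k,x_l] - (1/2)x_0^2 = -\sum_{k>l} x_k x_l - (1/2)\sum_{k=1}^n x_k^2. -/

import Mathlib

/-- Words in the generators `x_1, …, x_n` (indexed by `Fin n`). -/
abbrev Word (n : ℕ) := List (Fin n)

/-- The completed tensor algebra `T = ∏ₘ H^{⊗m}` on the basis `x_1, …, x_n` of `H`,
modeled as the space of ℚ-valued coefficient functions on words in the generators. -/
abbrev T (n : ℕ) : Type := Word n → ℚ

/-- The generator `x_k` as an element of `T n`. -/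
def xgen {n : ℕ} (k : Fin n) : T n := fun w => if w = [k] then 1 else 0

/-- `x₀ = -∑ₖ xₖ`. -/
def x0 (n : ℕ) : T n := -∑ k : Fin n, xgen k

/-- The operation `⋄` on `T_{≥1}`, determined on monomials by
`(x_{i_1}⋯x_{i_{l-1}}x_{i_l}) ⋄ (x_{j_1}x_{j_2}⋯x_{j_m})
  = -δ_{i_l j_1} x_{i_1}⋯x_{i_{l-1}} x_{j_1}x_{j_2}⋯x_{j_m}`,
extended bilinearly and continuously. -/
def dia {n : ℕ} (f g : T n) : T n :=
  fun w => -∑ i ∈ Finset.range w.length, f (w.take (i + 1)) * g (w.drop i)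

/-- `f ∈ T_{≥p}`: all components of degree `< p` vanish. -/
def degGE {n : ℕ} (p : ℕ) (f : T n) : Prop := ∀ w : Word n, w.length < p → f w = 0

/-- The unit `1 ∈ T n` for the tensor product. -/
def oneT {n : ℕ} : T n := fun w => if w = [] then 1 else 0

/-- The (completed) tensor product on `T n`: concatenation product. -/
def mulT {n : ℕ} (f g : T n) : T n :=
  fun w => ∑ i ∈ Finset.range (w.length + 1), f (w.take i) * g (w.drop i)

/-- Powers with respect to the tensor product. -/
def powT {n : ℕ} (f : T n) : ℕ → T n
  | 0 => oneT
  | m + 1 => mulT f (powT f m)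

/-- Ordered product of a list of elements of `T n`. -/
def prodT {n : ℕ} : List (T n) → T n
  | [] => oneT
  | a :: l => mulT a (prodT l)

/-- Substitution of an element `a ∈ T_{≥1}` into a formal power series `F ∈ ℚ[[z]]`:
`F(a) = ∑ₘ (coeff m F) aᵐ`, a finite sum in each degree. -/
noncomputable def substT {n : ℕ} (F : PowerSeries ℚ) (a : T n) : T n :=
  fun w => ∑ m ∈ Finset.range (w.length + 1), PowerSeries.coeff m F * powT a m w

/-- The exponential `e^a` for `a ∈ T_{≥1}`. -/
noncomputable def expT {n : ℕ} (a : T n) : T n := substT (PowerSeries.exp ℚ) a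

/-- The power series `log(1+z) = ∑_{m≥1} (-1)^{m+1} zᵐ/m`. -/
def logSeries : PowerSeries ℚ :=
  PowerSeries.mk fun m => if m = 0 then 0 else (-1 : ℚ) ^ (m + 1) / (m : ℚ)

/-- The logarithm `log a` for `a ∈ 1 + T_{≥1}`. -/
noncomputable def logT {n : ℕ} (a : T n) : T n := substT logSeries (a - oneT)

/-- The Baker–Campbell–Hausdorff product `Ξ = x₁ * x₂ * ⋯ * xₙ = log(e^{x₁}e^{x₂}⋯e^{xₙ})`. -/
noncomputable def Xi (n : ℕ) : T n := logT (prodT ((List.finRange n).map fun k => expT (xgen k)))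

/-- The continuous algebra automorphism `Q` of `T n` with `Q(x_k) = -x_{n-k+1}`
(reversing and negating the basis). -/
def Qauto {n : ℕ} (f : T n) : T n := fun w => (-1 : ℚ) ^ w.length * f (w.map Fin.rev)

/-- `s(z) = 1/(e^{-z}-1) + 1/z` is characterized in `ℚ[[z]]` by the equation
`s(z) · (z·(e^{-z}-1)) = z + (e^{-z}-1)`. -/
def sSpec (s : PowerSeries ℚ) : Prop :=
  s * (PowerSeries.X * (PowerSeries.rescale (-1) (PowerSeries.exp ℚ) - 1)) =
    PowerSeries.X + (PowerSeries.rescale (-1) (PowerSeries.exp ℚ) - 1)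

/-- `g(z) = z/(e^{-z}-1)` is characterized in `ℚ[[z]]` by `g(z)·(e^{-z}-1) = z`. -/
def gSpec (g : PowerSeries ℚ) : Prop :=
  g * (PowerSeries.rescale (-1) (PowerSeries.exp ℚ) - 1) = PowerSeries.X

/-!
Everything is read off coefficientwise in degrees `≤ 2`. The product
`P = e^{x₁} ⋯ e^{xₙ}` has coefficient `1` at each `x_a`, and at `x_a x_b` the coefficient
`1`, `1/2` or `0` according as `a < b`, `a = b` or `a > b`; since `Ξ = (P - 1) - (P - 1)²/2 + ⋯`,
this gives `Ξ_{(1)} = -x₀` and `Ξ_{(2)} = P_{(2)} - x₀²/2`. In degree 2 the `⋄`-inverse equation,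
together with `V_{(1)} = x₀`, forces `V_{(2)} = Ξ_{(2)}`, while `x₀ s(Ξ) x₀` contributes
`s(0) x₀² = -x₀²/2`. The second equality is the formal identity `x₀² = ∑_{k,l} x_k x_l`,
split along `k < l`, `k = l` and `k > l`.
-/

lemma half_smul_sum_antisymm_sub_half_smul_sum_sum {ι M : Type*} [Fintype ι] [LinearOrder ι]
    [AddCommGroup M] [Module ℚ M] (m : ι → ι → M) :
    (1/2 : ℚ) • (∑ k, ∑ l, if k < l then m k l - m l k else 0) - (1/2 : ℚ) • ∑ k, ∑ l, m k l =
      -(∑ k, ∑ l, if l < k then m k l else 0) - (1/2 : ℚ) • ∑ k, m k k := by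
  have hsplit : ∑ k, ∑ l, m k l = (∑ k, ∑ l, if k < l then m k l else 0) + ∑ k, m k k +
      ∑ k, ∑ l, if l < k then m k l else 0 := by
    have htri : ∀ k l, m k l = (if k < l then m k l else 0) + (if k = l then m k l else 0) +
        (if l < k then m k l else 0) := by
      intro k l
      rcases lt_trichotomy k l with h | rfl | h
      · simp [h, h.ne, h.not_gt]
      · simp
      · simp [h, h.ne', h.not_gt]
    conv_lhs => enter [2, k, 2, l]; rw [htri k l]
    simp [Finset.sum_add_distrib]
  have hswap : (∑ k, ∑ l, if k < l then m l k else 0) = ∑ k, ∑ l, if l < k then m k l else 0 :=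
    Finset.sum_comm
  have hsub : (∑ k, ∑ l, if k < l then m k l - m l k else 0) =
      (∑ k, ∑ l, if k < l then m k l else 0) - ∑ k, ∑ l, if k < l then m l k else 0 := by
    simp only [← Finset.sum_sub_distrib, ite_sub_ite, sub_zero]
  rw [hsub, hswap, hsplit]
  module

section Coefficients

variable {n : ℕ}

@[simp] lemma oneT_apply_nil : (oneT : T n) [] = 1 := rfl

@[simp] lemma oneT_apply_cons (a : Fin n) (w : Word n) : (oneT : T n) (a :: w) = 0 := rfl

@[simp] lemma xgen_apply_nil (k : Fin n) : xgen k [] = 0 := rfl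

@[simp] lemma xgen_apply_singleton (k a : Fin n) : xgen k [a] = if a = k then 1 else 0 := by
  simp [xgen]

@[simp] lemma xgen_apply_pair (k a b : Fin n) : xgen k [a, b] = 0 := by
  simp [xgen]

@[simp] lemma x0_apply_nil : x0 n [] = 0 := by
  simp [x0, Finset.sum_apply]

@[simp] lemma x0_apply_singleton (a : Fin n) : x0 n [a] = -1 := by
  simp [x0, Finset.sum_apply]

@[simp] lemma x0_apply_pair (a b : Fin n) : x0 n [a, b] = 0 := by
  simp [x0, Finset.sum_apply]

@[simp] lemma mulT_apply_nil (f g : T n) : mulT f g [] = f [] * g [] := by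
  simp [mulT]

@[simp] lemma mulT_apply_singleton (f g : T n) (a : Fin n) :
    mulT f g [a] = f [] * g [a] + f [a] * g [] := by
  simp [mulT, Finset.sum_range_succ]

@[simp] lemma mulT_apply_pair (f g : T n) (a b : Fin n) :
    mulT f g [a, b] = f [] * g [a, b] + f [a] * g [b] + f [a, b] * g [] := by
  simp [mulT, Finset.sum_range_succ]

lemma dia_apply_pair (f g : T n) (a b : Fin n) :
    dia f g [a, b] = -(f [a] * g [a, b] + f [a, b] * g [b]) := by
  simp [dia, Finset.sum_range_succ]

lemma mulT_oneT (f : T n) : mulT f oneT = f := by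
  funext w
  rw [mulT, Finset.sum_eq_single_of_mem w.length (by simp)]
  · simp [oneT]
  · intro i hi hne
    have : w.drop i ≠ [] := by simp at hi ⊢; omega
    simp [oneT, this]

lemma powT_two (f : T n) : powT f 2 = mulT f f := by
  simp [powT, mulT_oneT]

lemma sum_mulT {ι : Type*} (s : Finset ι) (f : ι → T n) (g : T n) :
    mulT (∑ i ∈ s, f i) g = ∑ i ∈ s, mulT (f i) g := by
  funext w
  simp only [mulT, Finset.sum_apply, Finset.sum_mul]
  exact Finset.sum_comm

lemma mulT_sum {ι : Type*} (s : Finset ι) (f : T n) (g : ι → T n) :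
    mulT f (∑ i ∈ s, g i) = ∑ i ∈ s, mulT f (g i) := by
  funext w
  simp only [mulT, Finset.sum_apply, Finset.mul_sum]
  exact Finset.sum_comm

lemma neg_mulT_neg (f g : T n) : mulT (-f) (-g) = mulT f g := by
  funext w
  simp [mulT]

lemma mulT_x0_x0 : mulT (x0 n) (x0 n) = ∑ k : Fin n, ∑ l : Fin n, mulT (xgen k) (xgen l) := by
  rw [x0, neg_mulT_neg, sum_mulT]
  simp_rw [mulT_sum]

@[simp] lemma substT_apply_nil (F : PowerSeries ℚ) (f : T n) :
    substT F f [] = PowerSeries.coeff 0 F := by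
  simp [substT, powT]

lemma substT_apply_singleton (F : PowerSeries ℚ) {f : T n} (hf : f [] = 0) (a : Fin n) :
    substT F f [a] = PowerSeries.coeff 1 F * f [a] := by
  simp [substT, Finset.sum_range_succ, powT, hf]

lemma substT_apply_pair (F : PowerSeries ℚ) {f : T n} (hf : f [] = 0) (a b : Fin n) :
    substT F f [a, b] =
      PowerSeries.coeff 1 F * f [a, b] + PowerSeries.coeff 2 F * (f [a] * f [b]) := by
  simp [substT, Finset.sum_range_succ, powT, hf]

end Coefficients

section Exponentials

variable {n : ℕ}

@[simp] lemma expT_xgen_apply_nil (k : Fin n) : expT (xgen k) [] = 1 := by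
  simp [expT]

@[simp] lemma expT_xgen_apply_singleton (k a : Fin n) :
    expT (xgen k) [a] = if a = k then 1 else 0 := by
  simp [expT, substT_apply_singleton _ (xgen_apply_nil k)]

@[simp] lemma expT_xgen_apply_pair (k a b : Fin n) :
    expT (xgen k) [a, b] = if a = k ∧ b = k then 1 / 2 else 0 := by
  simp [expT, substT_apply_pair _ (xgen_apply_nil k), PowerSeries.coeff_exp, ite_and]
  split_ifs <;> rfl

variable {l : List (Fin n)}

@[simp] lemma prodT_expT_apply_nil :
    prodT (l.map fun k => expT (xgen k)) [] = 1 := by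
  induction l with
  | nil => rfl
  | cons k l ih => simp [prodT, ih]

lemma prodT_expT_apply_singleton (hl : l.Nodup) (a : Fin n) :
    prodT (l.map fun k => expT (xgen k)) [a] = if a ∈ l then 1 else 0 := by
  induction l with
  | nil => rfl
  | cons k l ih =>
    obtain ⟨hkl, hl⟩ := List.nodup_cons.mp hl
    simp only [List.map_cons, prodT, mulT_apply_singleton, expT_xgen_apply_nil,
      expT_xgen_apply_singleton, prodT_expT_apply_nil, ih hl, List.mem_cons]
    by_cases ha : a = k
    · simp [ha, hkl]
    · simp [ha]

lemma prodT_expT_apply_pair (hl : l.Pairwise (· < ·)) (a b : Fin n) :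
    prodT (l.map fun k => expT (xgen k)) [a, b] =
      if a ∈ l ∧ b ∈ l then (if a < b then 1 else if a = b then 1 / 2 else 0) else 0 := by
  induction l with
  | nil => rfl
  | cons k l ih =>
    obtain ⟨hk, hl⟩ := List.pairwise_cons.mp hl
    have hkl : k ∉ l := fun h => lt_irrefl k (hk k h)
    simp only [List.map_cons, prodT, mulT_apply_pair, expT_xgen_apply_nil,
      expT_xgen_apply_singleton, expT_xgen_apply_pair, prodT_expT_apply_nil,
      prodT_expT_apply_singleton hl.nodup, ih hl, List.mem_cons]
    by_cases ha : a = k <;> by_cases hb : b = k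
    · simp [ha, hb, hkl]
    · by_cases hbl : b ∈ l <;> simp [ha, hb, hkl, hbl, hk b]
    · by_cases hal : a ∈ l
      · simp [ha, hb, hkl, hal, (hk a hal).not_gt]
      · simp [ha, hb, hkl, hal]
    · simp [ha, hb]

end Exponentials

section BCH

variable {n : ℕ}

lemma Xi_apply_singleton (a : Fin n) : Xi n [a] = 1 := by
  rw [Xi, logT, substT_apply_singleton _ (by simp)]
  simp [logSeries, prodT_expT_apply_singleton (List.nodup_finRange n)]

lemma Xi_apply_pair (a b : Fin n) :
    Xi n [a, b] = (if a < b then 1 else if a = b then 1 / 2 else 0) - 1 / 2 := by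
  rw [Xi, logT, substT_apply_pair _ (by simp)]
  simp [logSeries, prodT_expT_apply_singleton (List.nodup_finRange n),
    prodT_expT_apply_pair (List.pairwise_lt_finRange n)]
  ring

end BCH

lemma coeff_zero_of_sSpec {s : PowerSeries ℚ} (hs : sSpec s) :
    PowerSeries.coeff 0 s = -1 / 2 := by
  -- compare coefficients of `z²`, using `z (e^{-z} - 1) = -z² + O(z³)`
  have h := congrArg (PowerSeries.coeff 2) hs
  simp [PowerSeries.coeff_mul, Finset.Nat.sum_antidiagonal_eq_sum_range_succ_mk,
    Finset.sum_range_succ, PowerSeries.coeff_rescale, PowerSeries.coeff_exp,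
    PowerSeries.coeff_X] at h
  rw [PowerSeries.coeff_zero_eq_constantCoeff]
  linarith

lemma apply_pair_eq_Xi_apply_pair {n : ℕ} {V : T n} (hV : degGE 2 (V - x0 n))
    (hV1 : dia (-(Xi n)) V = x0 n) (a b : Fin n) : V [a, b] = Xi n [a, b] := by
  have hVb : V [b] = -1 := by
    simpa [add_eq_zero_iff_eq_neg] using hV [b] (by simp)
  have h := congrFun hV1 [a, b]
  simp [dia_apply_pair, Xi_apply_singleton, hVb] at h
  linarith

section DegreeTwo

variable {n : ℕ}

lemma mulT_xgen_xgen_apply_pair (k l a b : Fin n) :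
    mulT (xgen k) (xgen l) [a, b] = if a = k ∧ b = l then 1 else 0 := by
  simp only [mulT_apply_pair, xgen_apply_nil, xgen_apply_singleton, xgen_apply_pair]
  by_cases a = k <;> by_cases b = l <;> simp [*]

lemma sum_sum_ite_mulT_xgen_xgen_apply_pair (P : Fin n → Fin n → Prop) [DecidableRel P]
    (a b : Fin n) :
    (∑ k, ∑ l, if P k l then mulT (xgen k) (xgen l) else 0) [a, b] = if P a b then 1 else 0 := by
  have hterm : ∀ k l, (if P k l then mulT (xgen k) (xgen l) else 0) [a, b] =
      if a = k ∧ b = l then (if P k l then 1 else 0) else 0 := by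
    intro k l
    rw [ite_apply, mulT_xgen_xgen_apply_pair, Pi.zero_apply]
    split_ifs <;> simp_all
  simp [Finset.sum_apply, hterm, ite_and]

lemma sum_powT_xgen_two_apply_pair (a b : Fin n) :
    (∑ k, powT (xgen k) 2) [a, b] = if a = b then 1 else 0 := by
  simp [Finset.sum_apply, powT_two]

lemma half_smul_sum_commutator_sub_half_smul_x0_sq :
    (1/2 : ℚ) • (∑ k : Fin n, ∑ l : Fin n,
        if k < l then mulT (xgen k) (xgen l) - mulT (xgen l) (xgen k) else 0)
      - (1/2 : ℚ) • mulT (x0 n) (x0 n) =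
    -(∑ k : Fin n, ∑ l : Fin n, if l < k then mulT (xgen k) (xgen l) else 0)
      - (1/2 : ℚ) • ∑ k : Fin n, powT (xgen k) 2 := by
  simp only [mulT_x0_x0, powT_two]
  exact half_smul_sum_antisymm_sub_half_smul_sum_sum _

end DegreeTwo

theorem statement12_general (n : ℕ) (s : PowerSeries ℚ) (hs : sSpec s)
    (V : T n) (hV : degGE 2 (V - x0 n))
    (hV1 : dia (-(Xi n)) V = x0 n) :
    (∀ w : Word n, w.length = 2 →
      (V + mulT (x0 n) (mulT (substT s (Xi n)) (x0 n))) w =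
        ((1/2 : ℚ) • (∑ k : Fin n, ∑ l : Fin n,
            if k < l then mulT (xgen k) (xgen l) - mulT (xgen l) (xgen k) else 0)
          - (1/2 : ℚ) • mulT (x0 n) (x0 n)) w) ∧
    (1/2 : ℚ) • (∑ k : Fin n, ∑ l : Fin n,
        if k < l then mulT (xgen k) (xgen l) - mulT (xgen l) (xgen k) else 0)
      - (1/2 : ℚ) • mulT (x0 n) (x0 n) =
    -(∑ k : Fin n, ∑ l : Fin n, if l < k then mulT (xgen k) (xgen l) else 0)
      - (1/2 : ℚ) • ∑ k : Fin n, powT (xgen k) 2 := by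
  refine ⟨?_, half_smul_sum_commutator_sub_half_smul_x0_sq⟩
  intro w hw
  obtain ⟨a, b, rfl⟩ := List.length_eq_two.mp hw
  rw [half_smul_sum_commutator_sub_half_smul_x0_sq]
  have hsandwich : mulT (x0 n) (mulT (substT s (Xi n)) (x0 n)) [a, b] = -1 / 2 := by
    simp [coeff_zero_of_sSpec hs]
  simp only [Pi.add_apply, Pi.sub_apply, Pi.neg_apply, Pi.smul_apply, smul_eq_mul, hsandwich,
    apply_pair_eq_Xi_apply_pair hV hV1, Xi_apply_pair, sum_powT_xgen_two_apply_pair,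
    sum_sum_ite_mulT_xgen_xgen_apply_pair fun k l => l < k]
  rcases lt_trichotomy a b with h | rfl | h
  · norm_num [h, h.ne, h.not_gt]
  · norm_num
  · norm_num [h, h.ne', h.not_gt]

/-- The degree-2 component of `Y = (-Ξ)⁻¹ + x₀ s(Ξ) x₀` equals
`(1/2)∑_{k<l}[xₖ,xₗ] - (1/2)x₀² = -∑_{k>l} xₖxₗ - (1/2)∑ₖ xₖ²`. -/
theorem statement12 (n : ℕ) (s : PowerSeries ℚ) (hs : sSpec s)
    (V : T n) (hV : degGE 2 (V - x0 n))
    (hV1 : dia (-(Xi n)) V = x0 n) (hV2 : dia V (-(Xi n)) = x0 n) :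
    (∀ w : Word n, w.length = 2 →
      (V + mulT (x0 n) (mulT (substT s (Xi n)) (x0 n))) w =
        ((1/2 : ℚ) • (∑ k : Fin n, ∑ l : Fin n,
            if k < l then mulT (xgen k) (xgen l) - mulT (xgen l) (xgen k) else 0)
          - (1/2 : ℚ) • mulT (x0 n) (x0 n)) w) ∧
    (1/2 : ℚ) • (∑ k : Fin n, ∑ l : Fin n,
        if k < l then mulT (xgen k) (xgen l) - mulT (xgen l) (xgen k) else 0)
      - (1/2 : ℚ) • mulT (x0 n) (x0 n) =
    -(∑ k : Fin n, ∑ l : Fin n, if l < k then mulT (xgen k) (xgen l) else 0)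
      - (1/2 : ℚ) • ∑ k : Fin n, powT (xgen k) 2 :=
  statement12_general n s hs V hV hV1
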